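/- arXiv:2412.21099 — 5 statements merged into one kernel-verified Lean document; each statement's English description precedes it below -/
import Mathlib

section
/- Let (Ω, F, P) be a probability space, m a sub-σ-algebra of F, and X, Y square-integrable real-valued random variables with E[X] = 1. Let a > 1, p ∈ [0,1], q > 0 be constants with (p+q)·a > 1, and set Δ = q/(p+q). Assume that almost surely: Var(X | m) = E[X | m]²/(a − 1), Var(Y | m) = E[Y | m]²/((p+q)a − 1), and E[Y | m] = Δ · E[X | m] + (1 − Δ). Then Var(Y) = (q²/(p+q)) · ((a−1)/((p+q)a − 1)) · Var(X) + (1 − q²/(p+q)) · (1/((p+q)a − 1)). -/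
/-!
By the law of total variance, a conditional variance of the form `E[X | m]² / k` turns into
a linear relation between `Var X`, `Var E[X | m]` and `(E X)²`, and likewise for `Y`.
The affine relation between the conditional means gives `E Y = E X = 1` and
`Var E[Y | m] = Δ² Var E[X | m]`; eliminating `Var E[X | m]` between the two relations
yields the recursion.
-/

open MeasureTheory ProbabilityTheory

/-- Conditional variance of `X` given the sub-σ-algebra `m`:
`Var(X | m) = E[(X − E[X | m])² | m]`. -/
noncomputable def condVar {Ω : Type*} (m : MeasurableSpace Ω) {m0 : MeasurableSpace Ω}
    (P : Measure Ω) (X : Ω → ℝ) : Ω → ℝ :=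
  P[fun ω => (X ω - (P[X | m]) ω) ^ 2 | m]

lemma variance_eq_of_condVar_ae_eq_sq_condExp_div {Ω : Type*} {m m₀ : MeasurableSpace Ω}
    {μ : Measure[m₀] Ω} [IsProbabilityMeasure μ] {X : Ω → ℝ} (hm : m ≤ m₀) (hX : MemLp X 2 μ)
    {k : ℝ} (h : Var[X; μ | m] =ᵐ[μ] fun ω => (μ[X | m] ω) ^ 2 / k) :
    Var[X; μ] = (Var[μ[X | m]; μ] + μ[X] ^ 2) / k + Var[μ[X | m]; μ] := by
  rw [← integral_condVar_add_variance_condExp hm hX, integral_congr_ae h, integral_div,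
    variance_eq_sub (hX.condExp one_le_two), integral_condExp hm]
  simp only [Pi.pow_apply, sub_add_cancel]

theorem stmt5_general {Ω : Type*} (m : MeasurableSpace Ω) [m0 : MeasurableSpace Ω]
    (hm : m ≤ m0) (P : Measure Ω) [IsProbabilityMeasure P]
    (X Y : Ω → ℝ) (hX : MemLp X 2 P) (hY : MemLp Y 2 P)
    (hXmean : ∫ ω, X ω ∂P = 1)
    (a p q Δ : ℝ) (ha : 1 < a)
    (hpqa : 1 < (p + q) * a) (hΔ : Δ = q / (p + q))
    (hvarX : condVar m P X =ᵐ[P] fun ω => ((P[X | m]) ω) ^ 2 / (a - 1))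
    (hvarY : condVar m P Y =ᵐ[P] fun ω => ((P[Y | m]) ω) ^ 2 / ((p + q) * a - 1))
    (hmean : P[Y | m] =ᵐ[P] fun ω => Δ * (P[X | m]) ω + (1 - Δ)) :
    variance Y P = q ^ 2 / (p + q) * ((a - 1) / ((p + q) * a - 1)) * variance X P
      + (1 - q ^ 2 / (p + q)) * (1 / ((p + q) * a - 1)) := by
  have hZ : MemLp (P[X | m]) 2 P := hX.condExp one_le_two
  have hYmean : P[Y] = 1 := by
    rw [← integral_condExp hm, integral_congr_ae hmean,
      integral_add ((hZ.integrable one_le_two).const_mul Δ) (integrable_const _),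
      integral_const_mul, integral_condExp hm, hXmean]
    simp
  have hVarCondY : Var[P[Y | m]; P] = Δ ^ 2 * Var[P[X | m]; P] := by
    rw [variance_congr hmean, variance_add_const (hZ.1.const_mul Δ), variance_const_mul]
  -- `condVar m P X` unfolds to Mathlib's `Var[X; P | m]`, so `hvarX` and `hvarY` apply as they are.
  rw [variance_eq_of_condVar_ae_eq_sq_condExp_div hm hY hvarY,
    variance_eq_of_condVar_ae_eq_sq_condExp_div hm hX hvarX, hVarCondY, hYmean, hXmean, hΔ]
  have hpq : p + q ≠ 0 := by
    rintro h
    norm_num [h] at hpqa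
  have ha₁ : a - 1 ≠ 0 := by linarith
  have hpqa₁ : (p + q) * a - 1 ≠ 0 := by linarith
  field_simp
  ring

/-- Abstract one-step variance recursion (Lemma 1 of the paper): with `E[X] = 1`,
`a > 1`, `p ∈ [0,1]`, `q > 0`, `(p+q)a > 1`, `Δ = q/(p+q)`, and a.s.
`Var(X|m) = E[X|m]²/(a−1)`, `Var(Y|m) = E[Y|m]²/((p+q)a−1)`,
`E[Y|m] = Δ E[X|m] + (1−Δ)`, we have
`Var(Y) = (q²/(p+q))((a−1)/((p+q)a−1)) Var(X) + (1 − q²/(p+q))(1/((p+q)a−1))`. -/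
theorem stmt5 {Ω : Type*} (m : MeasurableSpace Ω) [m0 : MeasurableSpace Ω]
    (hm : m ≤ m0) (P : Measure Ω) [IsProbabilityMeasure P]
    (X Y : Ω → ℝ) (hX : MemLp X 2 P) (hY : MemLp Y 2 P)
    (hXmean : ∫ ω, X ω ∂P = 1)
    (a p q Δ : ℝ) (ha : 1 < a) (hp : p ∈ Set.Icc (0 : ℝ) 1) (hq : 0 < q)
    (hpqa : 1 < (p + q) * a) (hΔ : Δ = q / (p + q))
    (hvarX : condVar m P X =ᵐ[P] fun ω => ((P[X | m]) ω) ^ 2 / (a - 1))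
    (hvarY : condVar m P Y =ᵐ[P] fun ω => ((P[Y | m]) ω) ^ 2 / ((p + q) * a - 1))
    (hmean : P[Y | m] =ᵐ[P] fun ω => Δ * (P[X | m]) ω + (1 - Δ)) :
    variance Y P = q ^ 2 / (p + q) * ((a - 1) / ((p + q) * a - 1)) * variance X P
      + (1 - q ^ 2 / (p + q)) * (1 / ((p + q) * a - 1)) :=
  stmt5_general m (m0 := m0) hm P X Y hX hY hXmean a p q Δ ha hpqa hΔ hvarX hvarY hmean
end

section
/- Let a₀ > 1 be a constant and let (a_t)_{t≥1}, (p_t)_{t≥1} ⊆ [0,1], (q_t)_{t≥1} ⊆ (0,∞) be real sequences with (p_t+q_t)·a_t > 1 for all t, and set Δ_t = q_t/(p_t+q_t). Let (V_t)_{t≥1} satisfy the variance recursion V_{t+1} = (q_t²/(p_t+q_t)) · ((a_t−1)/((p_t+q_t)a_t − 1)) · V_t + (1 − q_t²/(p_t+q_t)) · (1/((p_t+q_t)a_t − 1)) for all t ≥ 1. If V_t = 1/(a₀ − 1) for all t ≥ 1, then necessarily q_t = Δ_t · a₀ / (a_t − Δ_t² a_t + Δ_t² a₀) for all t ≥ 1.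 -/
/-! A constant variance `1/(a₀ - 1)` makes the recursion a fixed-point equation; clearing
denominators turns it into `(p+q)² a - q² a + q² a₀ = (p+q) a₀`, i.e.
`a - Δ² a + Δ² a₀ = a₀ / (p+q)`, which is the claimed formula for `q` solved for its denominator. -/

namespace SmithMiller

noncomputable def varianceStep (p q a V : ℝ) : ℝ :=
  q ^ 2 / (p + q) * ((a - 1) / ((p + q) * a - 1)) * V
    + (1 - q ^ 2 / (p + q)) * (1 / ((p + q) * a - 1))

theorem varianceStep_eq_self_iff {p q a a₀ : ℝ} (hs : p + q ≠ 0)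
    (hpqa : (p + q) * a ≠ 1) (ha₀ : a₀ ≠ 1) :
    varianceStep p q a (1 / (a₀ - 1)) = 1 / (a₀ - 1) ↔
      (p + q) ^ 2 * a - q ^ 2 * a + q ^ 2 * a₀ = (p + q) * a₀ := by
  have hsa : (p + q) * a - 1 ≠ 0 := sub_ne_zero.2 hpqa
  have ha₀' : a₀ - 1 ≠ 0 := sub_ne_zero.2 ha₀
  unfold varianceStep
  field_simp
  constructor <;> intro h <;> linarith

theorem eq_mul_div_of_sq_mul_add_sq_mul_eq {p q a a₀ : ℝ} (hs : p + q ≠ 0) (ha₀ : a₀ ≠ 0)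
    (h : (p + q) ^ 2 * a - q ^ 2 * a + q ^ 2 * a₀ = (p + q) * a₀) :
    q = q / (p + q) * a₀ / (a - (q / (p + q)) ^ 2 * a + (q / (p + q)) ^ 2 * a₀) := by
  have hden : a - (q / (p + q)) ^ 2 * a + (q / (p + q)) ^ 2 * a₀ = a₀ / (p + q) := by
    field_simp
    linear_combination h
  rw [hden]
  field_simp

end SmithMiller

open SmithMiller in
theorem stmt6_general (a₀ : ℝ) (ha₀ : 1 < a₀) (a p q V Δ : ℕ → ℝ)
    (hpqa : ∀ t, 1 ≤ t → 1 < (p t + q t) * a t)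
    (hΔ : ∀ t, 1 ≤ t → Δ t = q t / (p t + q t))
    (hrec : ∀ t, 1 ≤ t → V (t + 1) =
      q t ^ 2 / (p t + q t) * ((a t - 1) / ((p t + q t) * a t - 1)) * V t
        + (1 - q t ^ 2 / (p t + q t)) * (1 / ((p t + q t) * a t - 1)))
    (hconst : ∀ t, 1 ≤ t → V t = 1 / (a₀ - 1)) :
    ∀ t, 1 ≤ t → q t = Δ t * a₀ / (a t - Δ t ^ 2 * a t + Δ t ^ 2 * a₀) := by
  intro t ht
  have hs : p t + q t ≠ 0 := by
    intro hs
    have h := hpqa t ht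
    rw [hs, zero_mul] at h
    exact absurd h zero_le_one.not_gt
  have hpqa_ne : (p t + q t) * a t ≠ 1 := (hpqa t ht).ne'
  have hfixed : varianceStep (p t) (q t) (a t) (1 / (a₀ - 1)) = 1 / (a₀ - 1) := by
    have h := hrec t ht
    rw [hconst t ht, hconst (t + 1) (by omega)] at h
    exact h.symm
  have hkey := (varianceStep_eq_self_iff hs hpqa_ne ha₀.ne').1 hfixed
  rw [hΔ t ht]
  exact eq_mul_div_of_sq_mul_add_sq_mul_eq hs (by positivity) hkey

/-- Lemma 2 of the paper: in the Generalized Smith–Miller variance recursion, a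
constant variance process `V_t ≡ 1/(a₀ − 1)` forces
`q_t = Δ_t a₀ / (a_t − Δ_t² a_t + Δ_t² a₀)` for all `t ≥ 1`. -/
theorem stmt6 (a₀ : ℝ) (ha₀ : 1 < a₀) (a p q V Δ : ℕ → ℝ)
    (hp : ∀ t, 1 ≤ t → p t ∈ Set.Icc (0 : ℝ) 1)
    (hq : ∀ t, 1 ≤ t → 0 < q t)
    (hpqa : ∀ t, 1 ≤ t → 1 < (p t + q t) * a t)
    (hΔ : ∀ t, 1 ≤ t → Δ t = q t / (p t + q t))
    (hrec : ∀ t, 1 ≤ t → V (t + 1) =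
      q t ^ 2 / (p t + q t) * ((a t - 1) / ((p t + q t) * a t - 1)) * V t
        + (1 - q t ^ 2 / (p t + q t)) * (1 / ((p t + q t) * a t - 1)))
    (hconst : ∀ t, 1 ≤ t → V t = 1 / (a₀ - 1)) :
    ∀ t, 1 ≤ t → q t = Δ t * a₀ / (a t - Δ t ^ 2 * a t + Δ t ^ 2 * a₀) :=
  stmt6_general a₀ ha₀ a p q V Δ hpqa hΔ hrec hconst
end

section
/- Let a₀ > 1 and ψ > 0 be constants, (Δ_t)_{t≥1} ⊆ (0,1], and (v_t)_{t≥1} a sequence of nonnegative integers. Define sequences (A_t)_{t≥1} (the predictive shape parameters a_{t|t−1}) and (a_t)_{t≥1} recursively by A_1 = a₀, a_t = A_t + v_t/ψ, and A_{t+1} = a₀ · a_t / (a_t − Δ_t² (a_t − a₀)). Then for all t ≥ 1, the denominators a_t − Δ_t²(a_t − a₀) are strictly positive, A_t ≥ a₀ > 1, and a_t ≥ a₀ > 1. -/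
/-!
For `0 ≤ d ≤ 1` the denominator `x - d (x - a₀) = (1 - d) x + d a₀` is a convex combination
of `x` and `a₀`, so it lies between `a₀` and `x` whenever `a₀ ≤ x`. Hence it is positive, and
`a₀ x / (x - d (x - a₀)) ≥ a₀`; since `a_t ≥ A_t`, induction on `t` keeps every shape
parameter above `a₀`.
-/

section ShapeRecursion

variable {a₀ x d : ℝ}

theorem le_sub_mul_sub (hx : a₀ ≤ x) (hd : d ≤ 1) : a₀ ≤ x - d * (x - a₀) := by
  nlinarith [sub_nonneg.2 hx]

theorem le_mul_div_sub_mul_sub (ha₀ : 0 < a₀) (hx : a₀ ≤ x) (hd₀ : 0 ≤ d) (hd : d ≤ 1) :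
    a₀ ≤ a₀ * x / (x - d * (x - a₀)) := by
  rw [le_div_iff₀ (ha₀.trans_le (le_sub_mul_sub hx hd))]
  exact mul_le_mul_of_nonneg_left (sub_le_self _ (mul_nonneg hd₀ (sub_nonneg.2 hx))) ha₀.le

end ShapeRecursion

/-- Inductive core of Theorem 1 of the paper: the predictive shape parameters
`A_t = a_{t|t−1}` and filtering shape parameters `a_t` of the variance-stationary
Generalized Smith–Miller Model satisfy `A_t ≥ a₀ > 1` and `a_t ≥ a₀ > 1`, with
strictly positive denominators in the update recursion. -/
theorem stmt8 (a₀ ψ : ℝ) (ha₀ : 1 < a₀) (hψ : 0 < ψ)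
    (Δ : ℕ → ℝ) (hΔ : ∀ t, 1 ≤ t → Δ t ∈ Set.Ioc (0 : ℝ) 1)
    (v : ℕ → ℕ) (A a : ℕ → ℝ)
    (hA1 : A 1 = a₀)
    (ha : ∀ t, 1 ≤ t → a t = A t + (v t : ℝ) / ψ)
    (hArec : ∀ t, 1 ≤ t → A (t + 1) = a₀ * a t / (a t - Δ t ^ 2 * (a t - a₀))) :
    ∀ t, 1 ≤ t →
      0 < a t - Δ t ^ 2 * (a t - a₀) ∧ a₀ ≤ A t ∧ a₀ ≤ a t := by
  have ha_of_A : ∀ t, 1 ≤ t → a₀ ≤ A t → a₀ ≤ a t := fun t ht hAt => by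
    rw [ha t ht]
    exact le_add_of_le_of_nonneg hAt (div_nonneg (Nat.cast_nonneg _) hψ.le)
  have hΔsq : ∀ t, 1 ≤ t → 0 ≤ Δ t ^ 2 ∧ Δ t ^ 2 ≤ 1 := fun t ht =>
    ⟨sq_nonneg _, pow_le_one₀ (hΔ t ht).1.le (hΔ t ht).2⟩
  have hA : ∀ t, 1 ≤ t → a₀ ≤ A t := by
    intro t ht
    induction t, ht using Nat.le_induction with
    | base => exact hA1.ge
    | succ t ht ih =>
      rw [hArec t ht]
      exact le_mul_div_sub_mul_sub (by linarith) (ha_of_A t ht ih) (hΔsq t ht).1 (hΔsq t ht).2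
  intro t ht
  have hat := ha_of_A t ht (hA t ht)
  exact ⟨by linarith [le_sub_mul_sub hat (hΔsq t ht).2], hA t ht, hat⟩
end

section
/- Let δ ∈ (0,1) and let (q_t)_{t≥1} be a real sequence with 0 < q_t < δ for all t. Let (a_t)_{t≥1} be defined by a given a_1 > 0 and a_{t+1} = q_t a_t + 1, and assume q_t · a_t > 1 for all t ≥ 1. Let (V_t)_{t≥1} satisfy V_1 ≥ 0 and V_{t+1} = ((q_t a_t − q_t)/(q_t a_t − 1)) · V_t + (1 − q_t)/(q_t a_t − 1) for all t ≥ 1. Then V_t → ∞ as t → ∞. -/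
/-!
Adding one linearises the variance recursion: `W_t = V_t + 1` satisfies
`W_{t+1} = r_t W_t` with `r_t = (q_t a_t − q_t)/(q_t a_t − 1) = 1 + (1 − q_t)/(q_t a_t − 1)`.
Since `a_{t+1} ≤ δ a_t + 1`, the sequence `a` is bounded by some `B`, so `q_t a_t − 1 ≤ δ B − 1`
and `r_t ≥ 1 + (1 − δ)/(δ B − 1) > 1`. Hence `W` grows at least geometrically from `W_1 ≥ 1`.
-/

open Filter

lemma le_max_div_of_succ_le_mul_add {u : ℕ → ℝ} {δ b : ℝ} (hδ0 : 0 ≤ δ) (hδ1 : δ < 1)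
    (h : ∀ n, u (n + 1) ≤ δ * u n + b) (n : ℕ) : u n ≤ max (u 0) (b / (1 - δ)) := by
  set M := max (u 0) (b / (1 - δ))
  have hbM : b ≤ (1 - δ) * M := by
    rw [← div_le_iff₀' (by linarith)]
    exact le_max_right _ _
  induction n with
  | zero => exact le_max_left _ _
  | succ n ih => nlinarith [h n]

lemma ratio_mul_add_add_one {q a V : ℝ} (hqa : q * a ≠ 1) :
    (q * a - q) / (q * a - 1) * V + (1 - q) / (q * a - 1) + 1 =
      (q * a - q) / (q * a - 1) * (V + 1) := by
  have : q * a - 1 ≠ 0 := sub_ne_zero.mpr hqa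
  field_simp
  ring

lemma one_add_div_le_ratio {q a δ D : ℝ} (hq : q ≤ δ) (hδ : δ ≤ 1) (hqa : 1 < q * a)
    (hD : q * a ≤ D) : 1 + (1 - δ) / (D - 1) ≤ (q * a - q) / (q * a - 1) := by
  have hden : 0 < q * a - 1 := by linarith
  have hsplit : (q * a - q) / (q * a - 1) = 1 + (1 - q) / (q * a - 1) := by
    field_simp
    ring
  rw [hsplit, add_le_add_iff_left]
  exact div_le_div₀ (by linarith) (by linarith) hden (by linarith)

lemma tendsto_atTop_of_succ_eq_mul {W r : ℕ → ℝ} {c : ℝ} (h₀ : 0 < W 0) (hc : 1 < c)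
    (hr : ∀ n, c ≤ r n) (hW : ∀ n, W (n + 1) = r n * W n) : Tendsto W atTop atTop := by
  have hpos : ∀ n, 0 < W n := fun n => by
    induction n with
    | zero => exact h₀
    | succ n ih => rw [hW]; exact mul_pos (by linarith [hr n]) ih
  exact tendsto_atTop_of_geom_le h₀ hc fun n => hW n ▸ mul_le_mul_of_nonneg_right (hr n) (hpos n).le

theorem stmt9_general (δ : ℝ) (hδ : δ ∈ Set.Ioo (0 : ℝ) 1)
    (q a V : ℕ → ℝ)
    (hq : ∀ t, 1 ≤ t → 0 < q t ∧ q t < δ)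
    (harec : ∀ t, 1 ≤ t → a (t + 1) = q t * a t + 1)
    (hqa : ∀ t, 1 ≤ t → 1 < q t * a t)
    (hV1 : 0 ≤ V 1)
    (hVrec : ∀ t, 1 ≤ t → V (t + 1) =
      (q t * a t - q t) / (q t * a t - 1) * V t + (1 - q t) / (q t * a t - 1)) :
    Tendsto V atTop atTop := by
  obtain ⟨hδ0, hδ1⟩ := hδ
  have ha_pos : ∀ t, 1 ≤ t → 0 < a t := fun t ht =>
    pos_of_mul_pos_right (one_pos.trans (hqa t ht)) (hq t ht).1.le
  have hqa_le : ∀ t, 1 ≤ t → q t * a t ≤ δ * a t := fun t ht =>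
    mul_le_mul_of_nonneg_right (hq t ht).2.le (ha_pos t ht).le
  set B := max (a 1) (1 / (1 - δ))
  have haB : ∀ n, a (n + 1) ≤ B :=
    le_max_div_of_succ_le_mul_add (u := fun n => a (n + 1)) hδ0.le hδ1 fun n => by
      simp only [harec (n + 1) (by omega)]
      linarith [hqa_le (n + 1) (by omega)]
  have hqaB : ∀ n, q (n + 1) * a (n + 1) ≤ δ * B := fun n =>
    (hqa_le (n + 1) (by omega)).trans (mul_le_mul_of_nonneg_left (haB n) hδ0.le)
  have hδB : 1 < δ * B := (hqa 1 le_rfl).trans_le (hqaB 0)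
  have hρ : 1 < 1 + (1 - δ) / (δ * B - 1) :=
    lt_add_of_pos_right _ (div_pos (by linarith) (by linarith))
  rw [← tendsto_add_atTop_iff_nat 1]
  have hW : Tendsto (fun n => V (n + 1) + 1) atTop atTop := by
    refine tendsto_atTop_of_succ_eq_mul (by simp only [zero_add]; linarith) hρ
      (fun n => one_add_div_le_ratio (hq (n + 1) (by omega)).2.le hδ1.le
        (hqa (n + 1) (by omega)) (hqaB n)) fun n => ?_
    rw [hVrec (n + 1) (by omega)]
    exact ratio_mul_add_add_one (hqa (n + 1) (by omega)).ne'
  simpa using tendsto_atTop_add_const_right _ (-1) hW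

/-- Deterministic content of Theorem 2 of the paper (diverging variance): with
`0 < q_t < δ < 1`, `a_{t+1} = q_t a_t + 1`, `q_t a_t > 1`, and the variance
recursion `V_{t+1} = ((q_t a_t − q_t)/(q_t a_t − 1)) V_t + (1 − q_t)/(q_t a_t − 1)`,
the variances diverge: `V_t → ∞`. -/
theorem stmt9 (δ : ℝ) (hδ : δ ∈ Set.Ioo (0 : ℝ) 1)
    (q a V : ℕ → ℝ)
    (hq : ∀ t, 1 ≤ t → 0 < q t ∧ q t < δ)
    (ha1 : 0 < a 1)
    (harec : ∀ t, 1 ≤ t → a (t + 1) = q t * a t + 1)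
    (hqa : ∀ t, 1 ≤ t → 1 < q t * a t)
    (hV1 : 0 ≤ V 1)
    (hVrec : ∀ t, 1 ≤ t → V (t + 1) =
      (q t * a t - q t) / (q t * a t - 1) * V t + (1 - q t) / (q t * a t - 1)) :
    Tendsto V atTop atTop :=
  stmt9_general δ hδ q a V hq harec hqa hV1 hVrec
end

section
/- Let a', b', y > 0, v a positive integer, ψ > 0, μ > 0, p ∈ [0,1], q > 0 with p + q > 0. Define a = a' + v/ψ, b = b' + y/(μψ), Δ = q/(p+q), z = (v/ψ)/(a' + v/ψ), ω₁ = Δz, ω₂ = Δ(1−z), ω₃ = 1 − Δ. Then ω₁ + ω₂ + ω₃ = 1 and (p·a + q·b)/((p+q)·a) = ω₁ · (y/(vμ)) + ω₂ · (b'/a') + ω₃. -/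
/-! The filtered ratio `b / a` is the mediant of the prior ratio `b' / a'` and the observed ratio
`(y/(μψ)) / (v/ψ) = y/(vμ)`, hence their average with weights `a'` and `v/ψ`; the state-space
update then averages `b / a` with the prior mean `1`, with weights `q` and `p`. -/

theorem mediant_eq_weighted_average {a b s t : ℝ} (ha : a ≠ 0) (hs : s ≠ 0) (has : a + s ≠ 0) :
    (b + t) / (a + s) = s / (a + s) * (t / s) + (1 - s / (a + s)) * (b / a) := by
  field_simp
  ring

theorem mul_add_mul_div_eq_weighted_average {p q a b : ℝ} (hpq : p + q ≠ 0) (ha : a ≠ 0) :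
    (p * a + q * b) / ((p + q) * a) = q / (p + q) * (b / a) + (1 - q / (p + q)) := by
  field_simp
  ring

theorem stmt13_general (a' b' y : ℝ) (ha' : 0 < a')
    (v : ℕ) (hv : 0 < v) (ψ μ : ℝ) (hψ : 0 < ψ) (hμ : 0 < μ)
    (p q : ℝ) (hpq : 0 < p + q)
    (a b Δ z ω₁ ω₂ ω₃ : ℝ)
    (hadef : a = a' + (v : ℝ) / ψ) (hbdef : b = b' + y / (μ * ψ))
    (hΔdef : Δ = q / (p + q)) (hzdef : z = ((v : ℝ) / ψ) / (a' + (v : ℝ) / ψ))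
    (hω₁ : ω₁ = Δ * z) (hω₂ : ω₂ = Δ * (1 - z)) (hω₃ : ω₃ = 1 - Δ) :
    ω₁ + ω₂ + ω₃ = 1 ∧
    (p * a + q * b) / ((p + q) * a) = ω₁ * (y / ((v : ℝ) * μ)) + ω₂ * (b' / a') + ω₃ := by
  have hs : 0 < (v : ℝ) / ψ := by positivity
  have hobserved : y / (μ * ψ) / ((v : ℝ) / ψ) = y / ((v : ℝ) * μ) := by
    field_simp
  subst hadef hbdef hΔdef hzdef hω₁ hω₂ hω₃
  refine ⟨by ring, ?_⟩
  rw [mul_add_mul_div_eq_weighted_average hpq.ne' (by positivity),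
    mediant_eq_weighted_average ha'.ne' hs.ne' (by positivity), hobserved]
  ring

/-- Algebraic content of the evolutionary credibility proposition (Proposition 3
of the paper): with `a = a' + v/ψ`, `b = b' + y/(μψ)`, `Δ = q/(p+q)`,
`z = (v/ψ)/(a' + v/ψ)`, `ω₁ = Δz`, `ω₂ = Δ(1−z)`, `ω₃ = 1−Δ`, the weights sum to
one and `(pa + qb)/((p+q)a) = ω₁ (y/(vμ)) + ω₂ (b'/a') + ω₃`. -/
theorem stmt13 (a' b' y : ℝ) (ha' : 0 < a') (hb' : 0 < b') (hy : 0 < y)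
    (v : ℕ) (hv : 0 < v) (ψ μ : ℝ) (hψ : 0 < ψ) (hμ : 0 < μ)
    (p q : ℝ) (hp : p ∈ Set.Icc (0 : ℝ) 1) (hq : 0 < q) (hpq : 0 < p + q)
    (a b Δ z ω₁ ω₂ ω₃ : ℝ)
    (hadef : a = a' + (v : ℝ) / ψ) (hbdef : b = b' + y / (μ * ψ))
    (hΔdef : Δ = q / (p + q)) (hzdef : z = ((v : ℝ) / ψ) / (a' + (v : ℝ) / ψ))
    (hω₁ : ω₁ = Δ * z) (hω₂ : ω₂ = Δ * (1 - z)) (hω₃ : ω₃ = 1 - Δ) :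
    ω₁ + ω₂ + ω₃ = 1 ∧
    (p * a + q * b) / ((p + q) * a) = ω₁ * (y / ((v : ℝ) * μ)) + ω₂ * (b' / a') + ω₃ :=
  stmt13_general a' b' y ha' v hv ψ μ hψ hμ p q hpq a b Δ z ω₁ ω₂ ω₃ hadef hbdef hΔdef hzdef hω₁ hω₂
    hω₃
end
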